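/- arXiv:1410.4742 — 3 statements merged into one kernel-verified Lean document; each statement's English description precedes it below -/
import Mathlib

section
/- Let S be a monoid. Every simple S-act is cancellable: if A is an S-act whose only subact is A itself, and B, C are S-acts with A ⊔ B ≅ A ⊔ C, then B ≅ C. -/
universe u v w

/-- A right `S`-act structure on a type `A`: a map `A × S → A`, `(a, s) ↦ a · s`,
with `a · 1 = a` and `a · (s*t) = (a · s) · t`. (`S`-acts are additionally required
to be nonempty; this is imposed via `Nonempty` hypotheses.) -/
class RAct (S : Type u) [Monoid S] (A : Type v) : Type (max u v) where
  act : A → S → A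
  act_one : ∀ a : A, act a 1 = a
  act_mul : ∀ (a : A) (s t : S), act a (s * t) = act (act a s) t

/-- Isomorphism of `S`-acts: a bijective action-preserving map. -/
def ActIso (S : Type u) [Monoid S] (A : Type v) (B : Type w) [RAct S A] [RAct S B] : Prop :=
  ∃ e : A ≃ B, ∀ (a : A) (s : S), e (RAct.act a s) = RAct.act (e a) s

/-- The coproduct (disjoint union) of two `S`-acts, with componentwise action. -/
instance sumRAct (S : Type u) [Monoid S] (A : Type v) (B : Type w) [RAct S A] [RAct S B] :
    RAct S (A ⊕ B) where
  act x s := Sum.map (fun a => RAct.act a s) (fun b => RAct.act b s) x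
  act_one := by rintro (a | b) <;> simp [RAct.act_one]
  act_mul := by rintro (a | b) s t <;> simp [RAct.act_mul]

/-- An `S`-act `A` is cancellable if `A ⊔ B ≅ A ⊔ C` implies `B ≅ C`
for all `S`-acts `B`, `C`. -/
def Cancellable (S : Type u) [Monoid S] (A : Type u) [RAct S A] : Prop :=
  ∀ (B C : Type u) [RAct S B] [RAct S C] [Nonempty B] [Nonempty C],
    ActIso S (A ⊕ B) (A ⊕ C) → ActIso S B C

/-- A subact of an `S`-act: a nonempty subset closed under the action. -/
def IsSubact (S : Type u) [Monoid S] {A : Type v} [RAct S A] (T : Set A) : Prop :=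
  T.Nonempty ∧ ∀ a ∈ T, ∀ s : S, RAct.act a s ∈ T

/-!
Let `e : A ⊔ B ≅ A ⊔ C`. Send `b ∈ B` to `e b`, and if that lands in `A`, apply `e` once more.
This is equivariant, and its counterpart built from `e⁻¹` inverts it, so it gives `B ≅ C` as
soon as the second application of `e` always lands in `C`. If it did not, the elements `x ∈ A`
with `e x ∈ A` and `e⁻¹ x ∈ B` would form a subact, hence all of `A` by simplicity; but for
any `x ∈ A` the point `e x ∈ A` then has `e⁻¹ (e x) = x ∉ B`.
-/

namespace Equiv

variable {α β γ : Type*}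

def skipLeft (e : α ⊕ β ≃ α ⊕ γ) (b : β) : α ⊕ γ :=
  (e (Sum.inr b)).elim (fun a => e (Sum.inl a)) Sum.inr

theorem symm_skipLeft_of_skipLeft_eq_inr {e : α ⊕ β ≃ α ⊕ γ} {b : β} {c : γ}
    (h : e.skipLeft b = Sum.inr c) : e.symm.skipLeft c = Sum.inr b := by
  rcases hb : e (Sum.inr b) with a | c'
  · rw [skipLeft, hb, Sum.elim_inl] at h
    rw [skipLeft, e.symm_apply_eq.2 h.symm, Sum.elim_inl, e.symm_apply_eq.2 hb.symm]
  · rw [skipLeft, hb, Sum.elim_inr, Sum.inr.injEq] at h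
    subst h
    rw [skipLeft, e.symm_apply_eq.2 hb.symm, Sum.elim_inr]

def cancelLeft (e : α ⊕ β ≃ α ⊕ γ) (h : ∀ b, (e.skipLeft b).isRight)
    (h' : ∀ c, (e.symm.skipLeft c).isRight) : β ≃ γ where
  toFun b := (e.skipLeft b).getRight (h b)
  invFun c := (e.symm.skipLeft c).getRight (h' c)
  left_inv b := by
    rw [Sum.getRight_eq_iff]
    exact symm_skipLeft_of_skipLeft_eq_inr (Sum.inr_getRight _ _).symm
  right_inv c := by
    rw [Sum.getRight_eq_iff]
    exact symm_skipLeft_of_skipLeft_eq_inr (e := e.symm) (Sum.inr_getRight _ _).symm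

theorem inr_cancelLeft_apply (e : α ⊕ β ≃ α ⊕ γ) (h : ∀ b, (e.skipLeft b).isRight)
    (h' : ∀ c, (e.symm.skipLeft c).isRight) (b : β) :
    Sum.inr (e.cancelLeft h h' b) = e.skipLeft b :=
  Sum.inr_getRight _ _

end Equiv

def IsActHom (S : Type*) [Monoid S] {X Y : Type*} [RAct S X] [RAct S Y] (f : X → Y) : Prop :=
  ∀ (x : X) (s : S), f (RAct.act x s) = RAct.act (f x) s

def IsSimpleAct (S : Type*) [Monoid S] (A : Type*) [RAct S A] : Prop :=
  ∀ T : Set A, IsSubact S T → T = Set.univ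

section

variable {S : Type*} [Monoid S] {A B C : Type*} [RAct S A] [RAct S B] [RAct S C]

namespace RAct

@[simp]
theorem inl_act (a : A) (s : S) :
    act (Sum.inl a : A ⊕ B) s = Sum.inl (act a s) :=
  rfl

@[simp]
theorem inr_act (b : B) (s : S) :
    act (Sum.inr b : A ⊕ B) s = Sum.inr (act b s) :=
  rfl

@[simp]
theorem isLeft_act (x : A ⊕ B) (s : S) : (act x s).isLeft = x.isLeft := by
  cases x <;> rfl

@[simp]
theorem isRight_act (x : A ⊕ B) (s : S) : (act x s).isRight = x.isRight := by
  cases x <;> rfl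

end RAct

theorem IsActHom.symm {e : A ≃ B} (he : IsActHom S e) : IsActHom S e.symm :=
  fun b s => e.injective (by rw [he, Equiv.apply_symm_apply, Equiv.apply_symm_apply])

theorem IsSimpleAct.mem_of_mem (hA : IsSimpleAct S A) {T : Set A}
    (hT : ∀ a ∈ T, ∀ s : S, RAct.act a s ∈ T) {a : A} (ha : a ∈ T) (x : A) : x ∈ T := by
  rw [hA T ⟨⟨a, ha⟩, hT⟩]
  trivial

theorem isActHom_skipLeft {e : A ⊕ B ≃ A ⊕ C} (he : IsActHom S e) : IsActHom S e.skipLeft := by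
  intro b s
  have hb := he (Sum.inr b) s
  rcases hb' : e (Sum.inr b) with a | c
  · rw [hb', RAct.inr_act, RAct.inl_act] at hb
    rw [Equiv.skipLeft, Equiv.skipLeft, hb, hb', Sum.elim_inl, Sum.elim_inl, ← he, RAct.inl_act]
  · rw [hb', RAct.inr_act, RAct.inr_act] at hb
    rw [Equiv.skipLeft, Equiv.skipLeft, hb, hb', Sum.elim_inr, Sum.elim_inr, RAct.inr_act]

theorem isRight_skipLeft (hA : IsSimpleAct S A) {e : A ⊕ B ≃ A ⊕ C} (he : IsActHom S e) (b : B) :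
    (e.skipLeft b).isRight := by
  rcases hb : e (Sum.inr b) with a | c
  · rw [Equiv.skipLeft, hb, Sum.elim_inl, ← Sum.not_isLeft]
    intro hl
    obtain ⟨a', ha'⟩ := Sum.isLeft_iff.1 hl
    let T : Set A := {x | (e (Sum.inl x)).isLeft ∧ (e.symm (Sum.inl x)).isRight}
    have hT : ∀ x ∈ T, ∀ s : S, RAct.act x s ∈ T := by
      rintro x ⟨hx, hx'⟩ s
      refine ⟨?_, ?_⟩
      · rwa [← RAct.inl_act, he, RAct.isLeft_act]
      · rwa [← RAct.inl_act, he.symm, RAct.isRight_act]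
    have haT : a ∈ T := ⟨by rw [ha']; rfl, by rw [e.symm_apply_eq.2 hb.symm]; rfl⟩
    have ha'T := (hA.mem_of_mem hT haT a').2
    rw [e.symm_apply_eq.2 ha'.symm] at ha'T
    exact Bool.false_ne_true ha'T
  · rw [Equiv.skipLeft, hb, Sum.elim_inr]
    rfl

theorem isActHom_cancelLeft {e : A ⊕ B ≃ A ⊕ C} (he : IsActHom S e)
    (h : ∀ b, (e.skipLeft b).isRight) (h' : ∀ c, (e.symm.skipLeft c).isRight) :
    IsActHom S (e.cancelLeft h h') := by
  intro b s
  apply Sum.inr_injective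
  rw [Equiv.inr_cancelLeft_apply, ← RAct.inr_act, Equiv.inr_cancelLeft_apply, isActHom_skipLeft he]

end

theorem simple_cancellable_general (S : Type u) [Monoid S] (A : Type u) [RAct S A]
    (hA : ∀ T : Set A, IsSubact S T → T = Set.univ)
    (B C : Type u) [RAct S B] [RAct S C]
    (h : ActIso S (A ⊕ B) (A ⊕ C)) : ActIso S B C := by
  obtain ⟨e, he⟩ : ∃ e : A ⊕ B ≃ A ⊕ C, IsActHom S e := h
  exact ⟨e.cancelLeft (isRight_skipLeft hA he) (isRight_skipLeft hA he.symm),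
    isActHom_cancelLeft he _ _⟩

/-- Every simple `S`-act (whose only subact is itself) is cancellable. -/
theorem simple_cancellable (S : Type u) [Monoid S] (A : Type u) [RAct S A] [Nonempty A]
    (hA : ∀ T : Set A, IsSubact S T → T = Set.univ)
    (B C : Type u) [RAct S B] [RAct S C] [Nonempty B] [Nonempty C]
    (h : ActIso S (A ⊕ B) (A ⊕ C)) : ActIso S B C :=
  simple_cancellable_general S A hA B C h
end

section
/- Let S be a monoid. Every finitely generated S-act is cancellable: if A is an S-act generated by a finite set (A = ⋃_{k=1}^n a_k S for some a_1, …, a_n ∈ A) and B, C are S-acts with A ⊔ B ≅ A ⊔ C, then B ≅ C. -/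
universe u v w

section Aux

variable {S : Type u} [Monoid S] {A : Type*} {B : Type*} {C : Type*}
  [RAct S A] [RAct S B] [RAct S C]

/-- one step of the forward trajectory map on `A ⊕ C`. -/
def Gm (e : A ⊕ B ≃ A ⊕ C) : A ⊕ C → A ⊕ C :=
  Sum.elim (fun a => e (Sum.inl a)) Sum.inr

lemma act_inl (a : A) (s : S) :
    RAct.act (Sum.inl a : A ⊕ B) s = Sum.inl (RAct.act a s) := rfl

lemma act_inr (b : B) (s : S) :
    RAct.act (Sum.inr b : A ⊕ B) s = Sum.inr (RAct.act b s) := rfl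

lemma symm_equivar (e : A ⊕ B ≃ A ⊕ C)
    (he : ∀ (x : A ⊕ B) (s : S), e (RAct.act x s) = RAct.act (e x) s) :
    ∀ (y : A ⊕ C) (s : S), e.symm (RAct.act y s) = RAct.act (e.symm y) s := by
  intro y s
  apply e.injective
  rw [e.apply_symm_apply, he, e.apply_symm_apply]

lemma Gm_inr (e : A ⊕ B ≃ A ⊕ C) (c : C) : Gm e (Sum.inr c) = Sum.inr c := rfl

lemma Gm_iter_inr (e : A ⊕ B ≃ A ⊕ C) (n : ℕ) (c : C) :
    (Gm e)^[n] (Sum.inr c) = Sum.inr c :=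
  Function.iterate_fixed rfl n

lemma Gm_uniq_aux (e : A ⊕ B ≃ A ⊕ C) {n m : ℕ} (hnm : n ≤ m) {y : A ⊕ C} {c c' : C}
    (hn : (Gm e)^[n] y = Sum.inr c) (hm : (Gm e)^[m] y = Sum.inr c') : c = c' := by
  have : (Gm e)^[m] y = Sum.inr c := by
    rw [show m = (m - n) + n by omega, Function.iterate_add_apply, hn, Gm_iter_inr]
  rw [this] at hm
  exact Sum.inr.inj hm

lemma Gm_uniq (e : A ⊕ B ≃ A ⊕ C) {n m : ℕ} {y : A ⊕ C} {c c' : C}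
    (hn : (Gm e)^[n] y = Sum.inr c) (hm : (Gm e)^[m] y = Sum.inr c') : c = c' := by
  rcases le_total n m with h | h
  · exact Gm_uniq_aux e h hn hm
  · exact (Gm_uniq_aux e h hm hn).symm

lemma Gm_equivar (e : A ⊕ B ≃ A ⊕ C)
    (he : ∀ (x : A ⊕ B) (s : S), e (RAct.act x s) = RAct.act (e x) s)
    (y : A ⊕ C) (s : S) : Gm e (RAct.act y s) = RAct.act (Gm e y) s := by
  cases y with
  | inl a =>
    show e (Sum.inl (RAct.act a s)) = RAct.act (e (Sum.inl a)) s
    rw [← act_inl, he]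
  | inr c => rfl

lemma Gm_iter_equivar (e : A ⊕ B ≃ A ⊕ C)
    (he : ∀ (x : A ⊕ B) (s : S), e (RAct.act x s) = RAct.act (e x) s)
    (n : ℕ) (y : A ⊕ C) (s : S) :
    (Gm e)^[n] (RAct.act y s) = RAct.act ((Gm e)^[n] y) s := by
  induction n generalizing y with
  | zero => rfl
  | succ n ih =>
    rw [Function.iterate_succ_apply, Function.iterate_succ_apply, Gm_equivar e he, ih]

/-- The key lemma: every `b : B` escapes to `C` under iteration of `Gm e`. -/
lemma escape (e : A ⊕ B ≃ A ⊕ C)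
    (he : ∀ (x : A ⊕ B) (s : S), e (RAct.act x s) = RAct.act (e x) s)
    (hA : ∃ (n : ℕ) (a : Fin n → A), ∀ x : A, ∃ (k : Fin n) (s : S), x = RAct.act (a k) s)
    (b : B) : ∃ (n : ℕ) (c : C), (Gm e)^[n] (e (Sum.inr b)) = Sum.inr c := by
  by_contra hcon
  push_neg at hcon
  have hx : ∀ n : ℕ, ∃ a : A, (Gm e)^[n] (e (Sum.inr b)) = Sum.inl a := by
    intro n
    cases h' : (Gm e)^[n] (e (Sum.inr b)) with
    | inl a => exact ⟨a, rfl⟩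
    | inr c => exact absurd h' (hcon n c)
  choose x hx using hx
  have hzero : e.symm (Sum.inl (x 0)) = Sum.inr b := by
    have h0 := hx 0
    rw [Function.iterate_zero_apply] at h0
    rw [← h0, e.symm_apply_apply]
  have hsucc : ∀ n, e (Sum.inl (x n)) = Sum.inl (x (n + 1)) := by
    intro n
    have h2 := hx (n + 1)
    rw [Function.iterate_succ_apply'] at h2
    rw [hx n] at h2
    exact h2
  have L1 : ∀ m i, (Gm e.symm)^[m] (Sum.inl (x (m + i))) = Sum.inl (x i) := by
    intro m
    induction m with
    | zero => intro i; simp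
    | succ m ih =>
      intro i
      rw [Function.iterate_succ_apply]
      have hst : Gm e.symm (Sum.inl (x (m + 1 + i))) = Sum.inl (x (m + i)) := by
        show e.symm (Sum.inl (x (m + 1 + i))) = Sum.inl (x (m + i))
        rw [show m + 1 + i = (m + i) + 1 by omega, ← hsucc (m + i), e.symm_apply_apply]
      rw [hst, ih]
  have L2 : ∀ i, (Gm e.symm)^[i + 1] (Sum.inl (x i)) = Sum.inr b := by
    intro i
    rw [Function.iterate_succ_apply']
    have h1 : (Gm e.symm)^[i] (Sum.inl (x i)) = Sum.inl (x 0) := by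
      simpa using L1 i 0
    rw [h1]
    exact hzero
  obtain ⟨N, a, hgen⟩ := hA
  choose k σ hk using fun n => hgen (x n)
  have key : ∀ i j : ℕ, i < j → k i = k j → False := by
    intro i j hij hkij
    have hi : RAct.act ((Gm e.symm)^[i + 1] (Sum.inl (a (k i)))) (σ i) = Sum.inr b := by
      rw [← Gm_iter_equivar e.symm (symm_equivar e he)]
      rw [show RAct.act (Sum.inl (a (k i)) : A ⊕ B) (σ i) = Sum.inl (x i) from by
        rw [act_inl, ← hk i]]
      exact L2 i
    have hj : RAct.act ((Gm e.symm)^[i + 1] (Sum.inl (a (k i)))) (σ j)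
        = Sum.inl (x (j - i - 1)) := by
      rw [hkij, ← Gm_iter_equivar e.symm (symm_equivar e he)]
      rw [show RAct.act (Sum.inl (a (k j)) : A ⊕ B) (σ j)
          = Sum.inl (x ((i + 1) + (j - i - 1))) from by
        rw [act_inl, ← hk j, show (i + 1) + (j - i - 1) = j from by omega]]
      exact L1 (i + 1) (j - i - 1)
    cases hY : (Gm e.symm)^[i + 1] (Sum.inl (a (k i))) with
    | inl a' => rw [hY, act_inl] at hi; simp at hi
    | inr b' => rw [hY, act_inr] at hj; simp at hj
  obtain ⟨i, j, hij, hkij⟩ := Finite.exists_ne_map_eq_of_infinite k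
  rcases hij.lt_or_gt with h | h
  · exact key i j h hkij
  · exact key j i h hkij.symm

/-- From a minimal forward escape, reconstruct the starting point by backward iteration. -/
lemma back (e : A ⊕ B ≃ A ⊕ C) :
    ∀ (n : ℕ) (x : A ⊕ B) (c : C),
      (∀ m < n, ∀ c', (Gm e)^[m] (e x) ≠ Sum.inr c') →
      (Gm e)^[n] (e x) = Sum.inr c →
      (Gm e.symm)^[n] (e.symm (Sum.inr c)) = x := by
  intro n
  induction n with
  | zero =>
    intro x c _ h
    rw [Function.iterate_zero_apply] at h ⊢
    rw [← h, e.symm_apply_apply]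
  | succ n ih =>
    intro x c hmin h
    obtain ⟨a₀, ha₀⟩ : ∃ a, e x = Sum.inl a := by
      cases h0 : e x with
      | inl a => exact ⟨a, rfl⟩
      | inr c' =>
        exact absurd (by rw [Function.iterate_zero_apply]; exact h0)
          (hmin 0 (Nat.succ_pos n) c')
    have h' : (Gm e)^[n] (e (Sum.inl a₀)) = Sum.inr c := by
      rw [Function.iterate_succ_apply, ha₀] at h
      exact h
    have hmin' : ∀ m < n, ∀ c', (Gm e)^[m] (e (Sum.inl a₀)) ≠ Sum.inr c' := by
      intro m hm c' hc
      apply hmin (m + 1) (by omega) c'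
      rw [Function.iterate_succ_apply, ha₀]
      exact hc
    have hIH := ih (Sum.inl a₀) c hmin' h'
    rw [Function.iterate_succ_apply', hIH]
    show e.symm (Sum.inl a₀) = x
    rw [← ha₀, e.symm_apply_apply]

noncomputable def phi (e : A ⊕ B ≃ A ⊕ C)
    (hesc : ∀ b : B, ∃ (n : ℕ) (c : C), (Gm e)^[n] (e (Sum.inr b)) = Sum.inr c)
    (b : B) : C :=
  (hesc b).choose_spec.choose

lemma phi_spec (e : A ⊕ B ≃ A ⊕ C)
    (hesc : ∀ b : B, ∃ (n : ℕ) (c : C), (Gm e)^[n] (e (Sum.inr b)) = Sum.inr c)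
    (b : B) : (Gm e)^[(hesc b).choose] (e (Sum.inr b)) = Sum.inr (phi e hesc b) :=
  (hesc b).choose_spec.choose_spec

lemma phi_eq_of (e : A ⊕ B ≃ A ⊕ C)
    (hesc : ∀ b : B, ∃ (n : ℕ) (c : C), (Gm e)^[n] (e (Sum.inr b)) = Sum.inr c)
    {b : B} {n : ℕ} {c : C} (h : (Gm e)^[n] (e (Sum.inr b)) = Sum.inr c) :
    phi e hesc b = c :=
  Gm_uniq e (phi_spec e hesc b) h

lemma phi_phi (e : A ⊕ B ≃ A ⊕ C)
    (hesc : ∀ b : B, ∃ (n : ℕ) (c : C), (Gm e)^[n] (e (Sum.inr b)) = Sum.inr c)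
    (hesc' : ∀ c : C, ∃ (n : ℕ) (b : B), (Gm e.symm)^[n] (e.symm (Sum.inr c)) = Sum.inr b)
    (b : B) : phi e.symm hesc' (phi e hesc b) = b := by
  classical
  have hb := hesc b
  set n := Nat.find hb with hn
  obtain ⟨c, hc⟩ := Nat.find_spec hb
  have hmin : ∀ m < n, ∀ c', (Gm e)^[m] (e (Sum.inr b)) ≠ Sum.inr c' := by
    intro m hm c' hc'
    exact Nat.find_min hb hm ⟨c', hc'⟩
  have hback := back e n (Sum.inr b) c hmin hc
  have h1 : phi e hesc b = c := phi_eq_of e hesc hc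
  rw [h1]
  exact phi_eq_of e.symm hesc' hback

lemma phi_equivar (e : A ⊕ B ≃ A ⊕ C)
    (he : ∀ (x : A ⊕ B) (s : S), e (RAct.act x s) = RAct.act (e x) s)
    (hesc : ∀ b : B, ∃ (n : ℕ) (c : C), (Gm e)^[n] (e (Sum.inr b)) = Sum.inr c)
    (b : B) (s : S) : phi e hesc (RAct.act b s) = RAct.act (phi e hesc b) s := by
  apply phi_eq_of e hesc (n := (hesc b).choose)
  rw [← act_inr, he, Gm_iter_equivar e he, phi_spec e hesc b]
  rfl

end Aux

/-- Every finitely generated `S`-act is cancellable. -/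
theorem finitelyGenerated_cancellable (S : Type u) [Monoid S] (A : Type u) [RAct S A]
    (hA : ∃ (n : ℕ) (a : Fin n → A), ∀ x : A, ∃ (k : Fin n) (s : S), x = RAct.act (a k) s)
    (B C : Type u) [RAct S B] [RAct S C] [Nonempty B] [Nonempty C]
    (h : ActIso S (A ⊕ B) (A ⊕ C)) : ActIso S B C := by
  obtain ⟨e, he⟩ := h
  have he' := symm_equivar e he
  have hesc := escape e he hA
  have hesc' := escape e.symm he' hA
  refine ⟨⟨phi e hesc, phi e.symm hesc', phi_phi e hesc hesc', ?_⟩,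
    fun b s => phi_equivar e he hesc b s⟩
  intro c
  exact phi_phi e.symm hesc' hesc c
end

section
/- Let S be a monoid and let A be an S-act. Then A is cancellable if and only if A is internally cancellable. -/
universe u v w

/-- The induced `S`-act structure on a subact. -/
def IsSubact.ract {S : Type u} [Monoid S] {A : Type v} [RAct S A] {T : Set A}
    (hT : IsSubact S T) : RAct S T where
  act a s := ⟨RAct.act a.1 s, hT.2 a.1 a.2 s⟩
  act_one a := Subtype.ext (RAct.act_one a.1)
  act_mul a s t := Subtype.ext (RAct.act_mul a.1 s t)

/-- Two subacts are isomorphic if they are isomorphic as `S`-acts with the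
induced actions. -/
def SubactIso {S : Type u} [Monoid S] {A : Type v} {A' : Type w} [RAct S A] [RAct S A']
    {T : Set A} {U : Set A'} (hT : IsSubact S T) (hU : IsSubact S U) : Prop :=
  @ActIso S _ T U hT.ract hU.ract

/-- An `S`-act `A` is internally cancellable if whenever `A = C ⊔ D = E ⊔ F` for
subacts `C, D, E, F` with `C ≅ E`, it follows that `D ≅ F`. -/
def InternallyCancellable (S : Type u) [Monoid S] (A : Type u) [RAct S A] : Prop :=
  ∀ (C D E F : Set A) (hC : IsSubact S C) (hD : IsSubact S D)
    (hE : IsSubact S E) (hF : IsSubact S F),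
    C ∪ D = Set.univ → C ∩ D = ∅ → E ∪ F = Set.univ → E ∩ F = ∅ →
    SubactIso hC hE → SubactIso hD hF

/-!
Call `U ⊆ X` a summand if `U` and `Uᶜ` are both closed under the action, so that
`X ≅ U ⊔ Uᶜ`. If `A` is cancellable and `A = C ⊔ D = E ⊔ F` with `C ≅ E`, then
`A ⊔ D ≅ E ⊔ F ⊔ D ≅ C ⊔ D ⊔ F ≅ A ⊔ F`, so `D ≅ F`.

Conversely, an isomorphism `e : A ⊔ B ≅ A ⊔ C` cuts `A ⊔ B` into four blocks according to
whether a point and its image under `e` lie in `A`. The copy of `A` and its preimage `e⁻¹ A`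
are both isomorphic to `A` and share the block `A ∩ e⁻¹ A`; cancelling it gives
`A ∩ e⁻¹ C ≅ B ∩ e⁻¹ A`, hence `B = (B ∩ e⁻¹ A) ⊔ (B ∩ e⁻¹ C) ≅ (A ∩ e⁻¹ C) ⊔ (B ∩ e⁻¹ C) ≅ C`.
Internal cancellation only applies when all four parts are nonempty. The degenerate case is
`A ≅ A ⊔ Q` with `Q ≠ ∅`, which is excluded by a Hilbert hotel argument: for the connected
component `K` of a point outside the image of `φ : A ↪ A`, shifting the chain
`K, φ K, φ² K, …` gives `Kᶜ ≅ (K ⊔ φ K)ᶜ`, and internal cancellation would then make the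
connected `K` isomorphic to the disconnected `K ⊔ φ K`.
-/

open Set Function

namespace RAct

variable {S : Type u} [Monoid S] {X : Type v} {Y : Type w} [RAct S X] [RAct S Y]

def Equivariant (S : Type u) [Monoid S] {X : Type v} {Y : Type w} [RAct S X] [RAct S Y]
    (f : X → Y) : Prop :=
  ∀ (x : X) (s : S), f (RAct.act x s) = RAct.act (f x) s

theorem Equivariant.symm {e : X ≃ Y} (he : Equivariant S e) : Equivariant S e.symm :=
  fun y s => e.injective <| by rw [he, e.apply_symm_apply, e.apply_symm_apply]

theorem equivariant_inl : Equivariant S (Sum.inl : X → X ⊕ Y) := fun _ _ => rfl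

theorem equivariant_inr : Equivariant S (Sum.inr : Y → X ⊕ Y) := fun _ _ => rfl

class IsSummand (S : Type u) [Monoid S] {X : Type v} [RAct S X] (U : Set X) : Prop where
  act_mem_iff : ∀ (x : X) (s : S), RAct.act x s ∈ U ↔ x ∈ U

namespace IsSummand

instance instRAct (U : Set X) [IsSummand S U] : RAct S U where
  act x s := ⟨RAct.act x.1 s, (act_mem_iff x.1 s).2 x.2⟩
  act_one x := Subtype.ext (RAct.act_one x.1)
  act_mul x s t := Subtype.ext (RAct.act_mul x.1 s t)

theorem equivariant_val (U : Set X) [IsSummand S U] : Equivariant S (Subtype.val : U → X) :=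
  fun _ _ => rfl

instance compl (U : Set X) [IsSummand S U] : IsSummand S Uᶜ :=
  ⟨fun x s => not_congr (act_mem_iff x s)⟩

instance inter (U V : Set X) [IsSummand S U] [IsSummand S V] : IsSummand S (U ∩ V) :=
  ⟨fun x s => and_congr (act_mem_iff x s) (act_mem_iff x s)⟩

instance union (U V : Set X) [IsSummand S U] [IsSummand S V] : IsSummand S (U ∪ V) :=
  ⟨fun x s => or_congr (act_mem_iff x s) (act_mem_iff x s)⟩

theorem iUnion {ι : Sort*} (U : ι → Set X) (hU : ∀ i, IsSummand S (U i)) :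
    IsSummand S (⋃ i, U i) :=
  ⟨fun x s => by simp only [mem_iUnion, (hU _).act_mem_iff]⟩

theorem sInter (𝒰 : Set (Set X)) (h𝒰 : ∀ U ∈ 𝒰, IsSummand S U) : IsSummand S (⋂₀ 𝒰) :=
  ⟨fun x s => forall₂_congr fun U hU => (h𝒰 U hU).act_mem_iff x s⟩

instance range_inl : IsSummand S (range (Sum.inl : X → X ⊕ Y)) :=
  ⟨by rintro (x | y) s <;> simp [RAct.act]⟩

instance range_inr : IsSummand S (range (Sum.inr : Y → X ⊕ Y)) :=
  ⟨by rintro (x | y) s <;> simp [RAct.act]⟩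

theorem preimage {f : X → Y} (hf : Equivariant S f) (T : Set Y) [IsSummand S T] :
    IsSummand S (f ⁻¹' T) :=
  ⟨fun x s => by rw [mem_preimage, hf, act_mem_iff, mem_preimage]⟩

theorem image {f : X → Y} (hf : Equivariant S f) (hinj : Injective f) [IsSummand S (range f)]
    (U : Set X) [IsSummand S U] : IsSummand S (f '' U) := by
  refine ⟨fun y s => ?_⟩
  by_cases hy : y ∈ range f
  · obtain ⟨x, rfl⟩ := hy
    rw [← hf, hinj.mem_set_image, hinj.mem_set_image, act_mem_iff]
  · have hys : RAct.act y s ∉ range f := fun h => hy ((act_mem_iff y s).1 h)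
    exact iff_of_false (fun h => hys (image_subset_range f U h))
      (fun h => hy (image_subset_range f U h))

theorem isSubact (U : Set X) [IsSummand S U] (hU : U.Nonempty) : IsSubact S U :=
  ⟨hU, fun x hx s => (act_mem_iff x s).2 hx⟩

theorem of_isSubact {U : Set X} (hU : IsSubact S U) (hUc : IsSubact S Uᶜ) : IsSummand S U :=
  ⟨fun x s => ⟨fun h => by_contra fun hx => hUc.2 x hx s h, fun hx => hU.2 x hx s⟩⟩

end IsSummand

section ActIso

variable {Z : Type*} {P : Type*} {Q : Type*} [RAct S Z] [RAct S P] [RAct S Q]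

theorem _root_.ActIso.refl : ActIso S X X := ⟨Equiv.refl X, fun _ _ => rfl⟩

theorem _root_.ActIso.symm (h : ActIso S X Y) : ActIso S Y X :=
  let ⟨e, he⟩ := h; ⟨e.symm, Equivariant.symm he⟩

theorem _root_.ActIso.trans (h : ActIso S X Y) (h' : ActIso S Y Z) : ActIso S X Z :=
  let ⟨e, he⟩ := h; let ⟨e', he'⟩ := h'; ⟨e.trans e', fun x s => by simp [he, he']⟩

theorem _root_.ActIso.sum_congr (h : ActIso S X Y) (h' : ActIso S P Q) :
    ActIso S (X ⊕ P) (Y ⊕ Q) :=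
  let ⟨e, he⟩ := h; let ⟨e', he'⟩ := h'
  ⟨e.sumCongr e', by rintro (x | p) s <;> simp [RAct.act, he, he']⟩

theorem _root_.ActIso.sum_comm : ActIso S (X ⊕ Y) (Y ⊕ X) :=
  ⟨Equiv.sumComm X Y, by rintro (x | y) s <;> rfl⟩

theorem _root_.ActIso.sum_assoc : ActIso S ((X ⊕ Y) ⊕ Z) (X ⊕ (Y ⊕ Z)) :=
  ⟨Equiv.sumAssoc X Y Z, by rintro ((x | y) | z) s <;> rfl⟩

theorem _root_.ActIso.of_isEmpty [IsEmpty X] [IsEmpty Y] : ActIso S X Y :=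
  ⟨Equiv.equivOfIsEmpty X Y, fun x => isEmptyElim x⟩

theorem _root_.ActIso.sum_empty [IsEmpty Y] : ActIso S (X ⊕ Y) X :=
  ⟨Equiv.sumEmpty X Y, by rintro (x | y) s; exacts [rfl, isEmptyElim y]⟩

theorem _root_.ActIso.empty_sum [IsEmpty X] : ActIso S (X ⊕ Y) Y :=
  ActIso.sum_comm.trans ActIso.sum_empty

theorem _root_.ActIso.nonempty_iff (h : ActIso S X Y) : Nonempty X ↔ Nonempty Y :=
  h.choose.nonempty_congr

theorem _root_.ActIso.set_nonempty {U : Set Y} [IsSummand S U] (h : ActIso S X U)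
    [Nonempty X] : U.Nonempty :=
  nonempty_coe_sort.1 (h.nonempty_iff.1 ‹_›)

theorem actIso_range {f : X → Y} (hf : Equivariant S f) (hinj : Injective f)
    [IsSummand S (range f)] : ActIso S X (range f) :=
  ⟨Equiv.ofInjective f hinj, fun x s => Subtype.ext (hf x s)⟩

theorem actIso_of_mem_iff (e : X ≃ Y) (he : Equivariant S e) {U : Set X} {V : Set Y}
    [IsSummand S U] [IsSummand S V] (h : ∀ x, x ∈ U ↔ e x ∈ V) : ActIso S U V :=
  ⟨e.subtypeEquiv h, fun x s => Subtype.ext (he x.1 s)⟩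

theorem actIso_of_image_eq {f : X → Y} (hf : Equivariant S f) (hinj : Injective f)
    {U : Set X} {V : Set Y} [IsSummand S U] [IsSummand S V] (h : f '' U = V) : ActIso S U V :=
  ⟨(Equiv.Set.image f U hinj).trans (Equiv.setCongr h), fun x s => Subtype.ext (hf x.1 s)⟩

theorem actIso_of_eq {U V : Set X} [IsSummand S U] [IsSummand S V] (h : U = V) : ActIso S U V :=
  actIso_of_image_eq (fun _ _ => rfl) injective_id (by rw [image_id, h])

theorem actIso_union (U V : Set X) [IsSummand S U] [IsSummand S V] (h : Disjoint U V) :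
    ActIso S (U ⊕ V) ↥(U ∪ V) := by
  classical
  exact ⟨(Equiv.Set.union h).symm, by rintro (x | x) s <;> rfl⟩

theorem actIso_sum_compl (U : Set X) [IsSummand S U] : ActIso S (U ⊕ ↥Uᶜ) X := by
  classical
  exact ⟨Equiv.Set.sumCompl U, by rintro (x | x) s <;> rfl⟩

theorem actIso_inter_sum_inter_compl (U V : Set X) [IsSummand S U] [IsSummand S V] :
    ActIso S (↥(U ∩ V) ⊕ ↥(U ∩ Vᶜ)) U :=
  (actIso_union _ _ (disjoint_compl_right.mono inter_subset_right inter_subset_right)).trans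
    (actIso_of_eq (inter_union_compl U V))

theorem actIso_range_inl : ActIso S X ↥(range (Sum.inl : X → X ⊕ Y)) :=
  actIso_range equivariant_inl Sum.inl_injective

theorem actIso_compl_range_inl : ActIso S Y ↥(range (Sum.inl : X → X ⊕ Y))ᶜ :=
  (actIso_range equivariant_inr Sum.inr_injective).trans (actIso_of_eq compl_range_inl.symm)

theorem actIso_sum_of_decompositions {P' Q' : Type*} [RAct S P'] [RAct S Q']
    (hX : ActIso S (P ⊕ Q) X) (hX' : ActIso S (P' ⊕ Q') X) (hP : ActIso S P P') :
    ActIso S (X ⊕ Q) (X ⊕ Q') :=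
  (hX'.symm.sum_congr .refl).trans <| ActIso.sum_assoc.trans <|
    (ActIso.refl.sum_congr ActIso.sum_comm).trans <| ActIso.sum_assoc.symm.trans <|
      ((hP.symm.sum_congr .refl).trans hX).sum_congr .refl

theorem _root_.ActIso.exists_isSummand (h : ActIso S (P ⊕ Q) X) :
    ∃ (U : Set X) (_ : IsSummand S U), ActIso S P U ∧ ActIso S Q ↥Uᶜ := by
  obtain ⟨e, he : Equivariant S e⟩ := h
  set U := e.symm ⁻¹' range Sum.inl
  have : IsSummand S U := IsSummand.preimage he.symm _
  exact ⟨U, this,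
    actIso_range_inl.trans (actIso_of_mem_iff e.symm he.symm (U := U) fun _ => .rfl).symm,
    actIso_compl_range_inl.trans (actIso_of_mem_iff e.symm he.symm (U := Uᶜ) fun _ => .rfl).symm⟩

end ActIso

section Component

/-- The connected component of `x`: its class under the equivalence relation generated by
`x ∼ x s`. -/
def component (S : Type u) [Monoid S] {X : Type v} [RAct S X] (x : X) : Set X :=
  ⋂₀ {U | IsSummand S U ∧ x ∈ U}

instance isSummand_component (x : X) : IsSummand S (component S x) :=
  IsSummand.sInter _ fun _ hU => hU.1

theorem mem_component_self (x : X) : x ∈ component S x :=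
  mem_sInter.2 fun _ hU => hU.2

theorem component_subset {U : Set X} [hU : IsSummand S U] {x : X} (hx : x ∈ U) :
    component S x ⊆ U :=
  sInter_subset_of_mem ⟨hU, hx⟩

theorem component_subset_of_mem {U : Set X} [IsSummand S U] {x y : X}
    (hy : y ∈ component S x) (hyU : y ∈ U) : component S x ⊆ U := by
  by_cases hx : x ∈ U
  · exact component_subset hx
  · exact absurd hyU (component_subset (U := Uᶜ) hx hy)

def Preconnected (S : Type u) [Monoid S] (X : Type v) [RAct S X] : Prop :=
  ∀ U : Set X, IsSummand S U → U = ∅ ∨ U = univ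

theorem preconnected_component (x : X) : Preconnected S (component S x) := by
  intro T _
  refine or_iff_not_imp_left.2 fun hT => eq_univ_of_forall fun z => ?_
  obtain ⟨y, hy⟩ := nonempty_iff_ne_empty.2 hT
  have : IsSummand S (range (Subtype.val : component S x → X)) := by
    rw [Subtype.range_coe]; infer_instance
  have := IsSummand.image (IsSummand.equivariant_val (S := S) _) Subtype.val_injective T
  obtain ⟨w, hw, hwz⟩ := component_subset_of_mem y.2 (mem_image_of_mem _ hy) z.2
  rwa [← Subtype.val_injective hwz]

theorem _root_.ActIso.preconnected (h : ActIso S X Y) (hX : Preconnected S X) :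
    Preconnected S Y := by
  obtain ⟨e, he⟩ := h
  intro T _
  have := IsSummand.preimage he T
  refine (hX _ this).imp (fun h => ?_) (fun h => ?_)
  · rw [← e.image_preimage T, h, image_empty]
  · rw [← e.image_preimage T, h, image_univ, e.range_eq_univ]

theorem not_preconnected_union {V W : Set X} [IsSummand S V] [IsSummand S W]
    (hVW : Disjoint V W) (hV : V.Nonempty) (hW : W.Nonempty) : ¬ Preconnected S ↥(V ∪ W) := by
  intro h
  obtain ⟨v, hv⟩ := hV
  obtain ⟨w, hw⟩ := hW
  rcases h _ (IsSummand.preimage (IsSummand.equivariant_val _) V) with h | h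
  · exact (eq_empty_iff_forall_notMem.1 h) ⟨v, Or.inl hv⟩ hv
  · have : (⟨w, Or.inr hw⟩ : ↥(V ∪ W)) ∈ Subtype.val ⁻¹' V := h ▸ mem_univ _
    exact hVW.notMem_of_mem_right hw this

end Component

theorem Equivariant.piecewise {f g : X → Y} (hf : Equivariant S f) (hg : Equivariant S g)
    (G : Set X) [IsSummand S G] [DecidablePred (· ∈ G)] : Equivariant S (G.piecewise f g) := by
  intro x s
  by_cases hx : x ∈ G
  · have hxs : RAct.act x s ∈ G := (IsSummand.act_mem_iff x s).2 hx
    rw [piecewise_eq_of_mem _ _ _ hx, piecewise_eq_of_mem _ _ _ hxs, hf]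
  · have hxs : RAct.act x s ∉ G := fun h => hx ((IsSummand.act_mem_iff x s).1 h)
    rw [piecewise_eq_of_notMem _ _ _ hx, piecewise_eq_of_notMem _ _ _ hxs, hg]

theorem _root_.Set.image_piecewise_compl {α : Type*} {φ : α → α} (hinj : Injective φ)
    {K G : Set α} [DecidablePred (· ∈ G)] (hK : Disjoint K (range φ)) (hG : G = K ∪ φ '' G) :
    G.piecewise φ id '' Kᶜ = (K ∪ φ '' K)ᶜ := by
  have hKG : K ⊆ G := hG ▸ subset_union_left
  ext y
  constructor
  · rintro ⟨x, hx, rfl⟩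
    by_cases hxG : x ∈ G
    · rw [piecewise_eq_of_mem _ _ _ hxG]
      rintro (h | ⟨z, hz, hzx⟩)
      · exact hK.notMem_of_mem_left h (mem_range_self x)
      · exact hx (hinj hzx ▸ hz)
    · rw [piecewise_eq_of_notMem _ _ _ hxG]
      rintro (h | h)
      · exact hx h
      · exact hxG (hG ▸ Or.inr (image_mono hKG h))
  · intro hy
    rw [mem_compl_iff, mem_union, not_or] at hy
    by_cases hyG : y ∈ G
    · obtain ⟨x, hxG, rfl⟩ : y ∈ φ '' G := (hG ▸ hyG : y ∈ K ∪ φ '' G).resolve_left hy.1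
      exact ⟨x, fun hxK => hy.2 ⟨x, hxK, rfl⟩, piecewise_eq_of_mem _ _ _ hxG⟩
    · exact ⟨y, fun hyK => hyG (hKG hyK), piecewise_eq_of_notMem _ _ _ hyG⟩

/-- Hilbert's hotel: `θ` shifts the chain `K, φ '' K, φ^[2] '' K, …` one step along `φ`
and fixes everything else. -/
theorem exists_injective_image_compl {φ : X → X} (hφ : Equivariant S φ) (hinj : Injective φ)
    [IsSummand S (range φ)] (K : Set X) [IsSummand S K] (hK : Disjoint K (range φ)) :
    ∃ θ : X → X, Equivariant S θ ∧ Injective θ ∧ θ '' Kᶜ = (K ∪ φ '' K)ᶜ := by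
  classical
  have hG : ⋃ n, φ^[n] '' K = K ∪ φ '' ⋃ n, φ^[n] '' K := by
    rw [image_iUnion, ← union_iUnion_nat_succ]
    simp only [iterate_zero, image_id, iterate_succ', image_comp]
  set G := ⋃ n, φ^[n] '' K
  have hKn : ∀ n, IsSummand S (φ^[n] '' K) := by
    intro n
    induction n with
    | zero => simpa
    | succ n ih => rw [iterate_succ', image_comp]; exact IsSummand.image hφ hinj _
  have := IsSummand.iUnion _ hKn
  refine ⟨G.piecewise φ id, hφ.piecewise (fun _ _ => rfl) G, ?_, image_piecewise_compl hinj hK hG⟩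
  refine (injective_piecewise_iff G).2 ⟨hinj.injOn, injOn_id _, fun x hx y hy h => hy ?_⟩
  rw [hG]
  exact Or.inr ⟨x, hx, h⟩

end RAct

open RAct

section Cancellation

variable {S : Type u} [Monoid S] {A : Type u} [RAct S A]

theorem internallyCancellable_iff : InternallyCancellable S A ↔
    ∀ (U V : Set A) [IsSummand S U] [IsSummand S V], U.Nonempty → Uᶜ.Nonempty → V.Nonempty →
      Vᶜ.Nonempty → ActIso S U V → ActIso S ↥Uᶜ ↥Vᶜ := by
  constructor
  · intro hA U V _ _ hU hUc hV hVc h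
    exact hA U Uᶜ V Vᶜ (IsSummand.isSubact U hU) (IsSummand.isSubact _ hUc)
      (IsSummand.isSubact V hV) (IsSummand.isSubact _ hVc)
      (union_compl_self U) (inter_compl_self U) (union_compl_self V) (inter_compl_self V) h
  · intro h C D E F hC hD hE hF hCD hCD' hEF hEF' hCE
    obtain rfl : D = Cᶜ := (IsCompl.of_eq hCD' hCD).symm.eq_compl
    obtain rfl : F = Eᶜ := (IsCompl.of_eq hEF' hEF).symm.eq_compl
    have := IsSummand.of_isSubact hC hD
    have := IsSummand.of_isSubact hE hF
    exact h C E hC.1 hD.1 hE.1 hF.1 hCE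

theorem Cancellable.internallyCancellable (hA : Cancellable S A) : InternallyCancellable S A :=
  internallyCancellable_iff.2 fun U V _ _ _ hUc _ hVc h =>
    have := hUc.to_subtype
    have := hVc.to_subtype
    hA _ _ (actIso_sum_of_decompositions (actIso_sum_compl U) (actIso_sum_compl V) h)

namespace InternallyCancellable

theorem surjective_of_injective (hA : InternallyCancellable S A) {φ : A → A}
    (hφ : Equivariant S φ) (hinj : Injective φ) [IsSummand S (range φ)] : Surjective φ := by
  by_contra hsurj
  obtain ⟨a, ha⟩ := not_forall.1 hsurj
  set K := component S a
  have hK : Disjoint K (range φ) :=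
    subset_compl_iff_disjoint_right.1 (component_subset (U := (range φ)ᶜ) ha)
  obtain ⟨θ, hθ, hθinj, hθK⟩ := exists_injective_image_compl hφ hinj K hK
  have := IsSummand.image hφ hinj K
  have haK : a ∈ K := mem_component_self a
  have hφa : φ a ∉ K := hK.notMem_of_mem_right (mem_range_self a)
  have hφφa : φ (φ a) ∉ K ∪ φ '' K := by
    rintro (h | h)
    · exact hK.notMem_of_mem_right (mem_range_self _) h
    · exact hφa (hinj.mem_set_image.1 h)
  have hiso := internallyCancellable_iff.1 hA Kᶜ (K ∪ φ '' K)ᶜ ⟨φ a, hφa⟩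
    (by rw [compl_compl]; exact ⟨a, haK⟩) ⟨_, hφφa⟩ (by rw [compl_compl]; exact ⟨a, Or.inl haK⟩)
    (actIso_of_image_eq hθ hθinj hθK)
  refine not_preconnected_union (S := S) (hK.mono_right (image_subset_range φ K)) ⟨a, haK⟩
    ⟨φ a, mem_image_of_mem φ haK⟩ ?_
  refine ActIso.preconnected ?_ (preconnected_component a)
  exact (actIso_of_eq (compl_compl K)).symm.trans (hiso.trans (actIso_of_eq (compl_compl _)))

variable {P Q P' Q' : Type*} [RAct S P] [RAct S Q] [RAct S P'] [RAct S Q']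

theorem not_actIso_sum_self (hA : InternallyCancellable S A) [Nonempty Q] :
    ¬ ActIso S (A ⊕ Q) A := by
  rintro ⟨f, hf : Equivariant S f⟩
  have : IsSummand S (range (f ∘ Sum.inl)) := by
    rw [range_comp, f.image_eq_preimage_symm]
    exact IsSummand.preimage hf.symm _
  obtain ⟨a, ha⟩ := hA.surjective_of_injective (fun a s => hf (Sum.inl a) s)
    (f.injective.comp Sum.inl_injective) (f (Sum.inr (Classical.arbitrary Q)))
  exact Sum.inl_ne_inr (f.injective ha)

theorem nonempty_of_actIso_sum (hA : InternallyCancellable S A) (hP : ActIso S P P')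
    (f : ActIso S (P ⊕ Q) A) (g : ActIso S (P' ⊕ Q') A) [Nonempty Q] : Nonempty Q' := by
  by_contra hQ'
  have := not_nonempty_iff.1 hQ'
  exact hA.not_actIso_sum_self
    ((((g.symm.trans ActIso.sum_empty).trans hP.symm).sum_congr .refl).trans f)

/-- Internal cancellation for decompositions into possibly empty parts. -/
theorem actIso_of_actIso_sum (hA : InternallyCancellable S A) (hP : ActIso S P P')
    (f : ActIso S (P ⊕ Q) A) (g : ActIso S (P' ⊕ Q') A) : ActIso S Q Q' := by
  rcases isEmpty_or_nonempty Q with hQ | hQ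
  · have : IsEmpty Q' := not_nonempty_iff.1 fun _ =>
      hQ.false (hA.nonempty_of_actIso_sum hP.symm g f).some
    exact .of_isEmpty
  have := hA.nonempty_of_actIso_sum hP f g
  rcases isEmpty_or_nonempty P with hP₀ | hP₀
  · have : IsEmpty P' := not_nonempty_iff.1 fun h => hP₀.false (hP.nonempty_iff.2 h).some
    exact ActIso.empty_sum.symm.trans (f.trans (g.symm.trans ActIso.empty_sum))
  have := hP.nonempty_iff.1 hP₀
  obtain ⟨U, _, hPU, hQU⟩ := f.exists_isSummand
  obtain ⟨V, _, hPV, hQV⟩ := g.exists_isSummand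
  refine hQU.trans (ActIso.trans ?_ hQV.symm)
  exact internallyCancellable_iff.1 hA U V hPU.set_nonempty hQU.set_nonempty hPV.set_nonempty
    hQV.set_nonempty (hPU.symm.trans (hP.trans hPV))

theorem cancellable (hA : InternallyCancellable S A) : Cancellable S A := by
  intro B C _ _ _ _ ⟨e, he⟩
  set L : Set (A ⊕ B) := range Sum.inl
  set M : Set (A ⊕ B) := e ⁻¹' range Sum.inl
  have : IsSummand S M := IsSummand.preimage he _
  have hM : ActIso S A M :=
    actIso_range_inl.trans (actIso_of_mem_iff e he (U := M) fun _ => .rfl).symm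
  have hMc : ActIso S C ↥Mᶜ :=
    actIso_compl_range_inl.trans (actIso_of_mem_iff e he (U := Mᶜ) fun _ => .rfl).symm
  have hLM : ActIso S ↥(L ∩ Mᶜ) ↥(M ∩ Lᶜ) :=
    hA.actIso_of_actIso_sum (actIso_of_eq (inter_comm L M))
      ((actIso_inter_sum_inter_compl L M).trans actIso_range_inl.symm)
      ((actIso_inter_sum_inter_compl M L).trans hM.symm)
  have hLcM : ActIso S ↥(Lᶜ ∩ M) ↥(Mᶜ ∩ L) :=
    (actIso_of_eq (inter_comm _ _)).trans (hLM.symm.trans (actIso_of_eq (inter_comm _ _)))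
  exact actIso_compl_range_inl.trans <| (actIso_inter_sum_inter_compl Lᶜ M).symm.trans <|
    (hLcM.sum_congr (actIso_of_eq (inter_comm _ _))).trans <|
      (actIso_inter_sum_inter_compl Mᶜ L).trans hMc.symm

end InternallyCancellable

end Cancellation

theorem cancellable_iff_internallyCancellable_general (S : Type u) [Monoid S] (A : Type u)
    [RAct S A] :
    Cancellable S A ↔ InternallyCancellable S A :=
  ⟨Cancellable.internallyCancellable, InternallyCancellable.cancellable⟩

/-- An `S`-act is cancellable iff it is internally cancellable. -/
theorem cancellable_iff_internallyCancellable (S : Type u) [Monoid S] (A : Type u)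
    [RAct S A] [Nonempty A] :
    Cancellable S A ↔ InternallyCancellable S A :=
  cancellable_iff_internallyCancellable_general S A
end
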